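/- Fix n ≥ 3. Define B_n = sup over q_2,...,q_n ∈ [0,1] of (1/n)·Σ_{i=2}^{n} (∏_{j=2}^{i−1} (1 − q_j/j))·q_i, and assume B_n ≥ 1/e (which holds for all n ≥ 3). Set s* = (B_n − 1/n)/(1 + B_n − 1/n), and for s ∈ [0,1] let w^{(n,s)} be the distribution with w_1 = s, w_n = 1 − s, and w_i = 0 otherwise. Then for every 0 < ε < min(s*, 1 − s*), there is no strategy q satisfying simultaneously A(w^{(n,s*+ε)}, q) ≥ sup_{q'} A(w^{(n,s*+ε)}, q') − ε/3 and A(w^{(n,s*−ε)}, q) ≥ sup_{q'} A(w^{(n,s*−ε)}, q') − ε/3. -/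

import Mathlib

open scoped BigOperators

/-- `lam p i = Σ_{l=i}^∞ p_l / l`. -/
noncomputable def lam (p : ℕ → ℝ) (i : ℕ) : ℝ := ∑' l : ℕ, if i ≤ l then p l / (l : ℝ) else 0

/-- `U q i = ∏_{l=1}^i (1 - q_l / l)`, with `U q 0 = 1`. -/
noncomputable def U (q : ℕ → ℝ) (i : ℕ) : ℝ := ∏ l ∈ Finset.Icc 1 i, (1 - q l / (l : ℝ))

/-- `A p q = Σ_{i=1}^∞ U_{i-1}(q) q_i λ_i(p)`. -/
noncomputable def A (p q : ℕ → ℝ) : ℝ := ∑' i : ℕ, U q i * q (i + 1) * lam p (i + 1)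

/-- The supremum of `A p q` over all strategies `q`. -/
noncomputable def supA (p : ℕ → ℝ) : ℝ :=
  sSup {y | ∃ q : ℕ → ℝ, (∀ i, 1 ≤ i → q i ∈ Set.Icc (0 : ℝ) 1) ∧ y = A p q}

/-- The distribution `w^{(n,s)}` supported on `{1, n}` with `w_1 = s`, `w_n = 1 - s`. -/
noncomputable def w (n : ℕ) (s : ℝ) : ℕ → ℝ := fun i =>
  if i = 1 then s else if i = n then 1 - s else 0

/-!
Against `w^{(n,s)}` a strategy only chooses `q 1`: stopping at the first candidate wins
`a(s) = s + (1 - s) / n`, and passing it wins `(1 - s) * tailValue n q ≤ b(s) = (1 - s) * B`.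
Hence `A ≤ q₁ a + (1 - q₁) b` while `supA ≥ max a b`. The lines `a` and `b` cross at `s*`, and
`a - b = D (s - s*)` with `D = 1 + B - 1/n`, which exceeds `1` because `B ≥ 0` and
`s* > ε > 0`. So an `ε/3`-optimal strategy at `s* + ε` has `(1 - q₁) ε D ≤ ε/3`, one at `s* - ε` has `q₁ ε D ≤ ε/3`, and both together give `D ≤ 2/3`.
-/

open Finset

def IsStrategy (q : ℕ → ℝ) : Prop := ∀ i, 1 ≤ i → q i ∈ Set.Icc (0 : ℝ) 1

noncomputable def tailValue (n : ℕ) (q : ℕ → ℝ) : ℝ :=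
  (1 / (n : ℝ)) * ∑ i ∈ Icc 2 n, (∏ j ∈ Icc 2 (i - 1), (1 - q j / (j : ℝ))) * q i

noncomputable def tailSup (n : ℕ) : ℝ :=
  sSup {y | ∃ q : ℕ → ℝ, IsStrategy q ∧ y = tailValue n q}

lemma IsStrategy.zero : IsStrategy 0 := fun _ _ => by simp

lemma IsStrategy.one_sub_div_mem_Icc {q : ℕ → ℝ} (hq : IsStrategy q) {j : ℕ} (hj : 1 ≤ j) :
    1 - q j / (j : ℝ) ∈ Set.Icc (0 : ℝ) 1 := by
  have hj' : (1 : ℝ) ≤ j := by exact_mod_cast hj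
  obtain ⟨h0, h1⟩ := hq j hj
  constructor
  · linarith [div_le_one_of_le₀ (h1.trans hj') (by linarith : (0 : ℝ) ≤ j)]
  · linarith [div_nonneg h0 (by linarith : (0 : ℝ) ≤ j)]

lemma IsStrategy.update_one {q : ℕ → ℝ} (hq : IsStrategy q) {x : ℝ} (hx : x ∈ Set.Icc (0 : ℝ) 1) :
    IsStrategy (Function.update q 1 x) := by
  intro i hi
  rcases eq_or_ne i 1 with rfl | h
  · simp [hx]
  · simpa [h] using hq i hi

lemma tailValue_update_one (n : ℕ) (q : ℕ → ℝ) (x : ℝ) :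
    tailValue n (Function.update q 1 x) = tailValue n q := by
  unfold tailValue
  congr 1
  refine sum_congr rfl fun i hi => ?_
  have hi : 2 ≤ i := (mem_Icc.1 hi).1
  rw [Function.update_of_ne (by omega)]
  congr 1
  exact prod_congr rfl fun j hj => by rw [Function.update_of_ne (by simp at hj; omega)]

lemma tailValue_nonneg (n : ℕ) {q : ℕ → ℝ} (hq : IsStrategy q) : 0 ≤ tailValue n q := by
  refine mul_nonneg (by positivity) (sum_nonneg fun i hi => mul_nonneg ?_ (hq i ?_).1)
  · exact prod_nonneg fun j hj => (hq.one_sub_div_mem_Icc (by simp at hj; omega)).1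
  · simp at hi; omega

lemma tailValue_le_one (n : ℕ) {q : ℕ → ℝ} (hq : IsStrategy q) : tailValue n q ≤ 1 := by
  have hterm : ∀ i ∈ Icc 2 n, (∏ j ∈ Icc 2 (i - 1), (1 - q j / (j : ℝ))) * q i ≤ 1 := by
    intro i hi
    simp only [mem_Icc] at hi
    exact mul_le_one₀
      (prod_le_one (fun j hj => (hq.one_sub_div_mem_Icc (by simp at hj; omega)).1)
        (fun j hj => (hq.one_sub_div_mem_Icc (by simp at hj; omega)).2))
      (hq i (by omega)).1 (hq i (by omega)).2
  calc tailValue n q ≤ (1 / (n : ℝ)) * n := by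
        refine mul_le_mul_of_nonneg_left ?_ (by positivity)
        exact (sum_le_card_nsmul _ _ 1 hterm).trans (by simp)
    _ ≤ 1 := by rcases eq_or_ne (n : ℝ) 0 with h | h <;> simp [h]

lemma bddAbove_tailValue (n : ℕ) : BddAbove {y | ∃ q : ℕ → ℝ, IsStrategy q ∧ y = tailValue n q} :=
  ⟨1, by rintro y ⟨q, hq, rfl⟩; exact tailValue_le_one n hq⟩

lemma tailValue_le_tailSup (n : ℕ) {q : ℕ → ℝ} (hq : IsStrategy q) : tailValue n q ≤ tailSup n :=
  le_csSup (bddAbove_tailValue n) ⟨q, hq, rfl⟩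

lemma tailSup_nonneg (n : ℕ) : 0 ≤ tailSup n :=
  (tailValue_nonneg n IsStrategy.zero).trans (tailValue_le_tailSup n IsStrategy.zero)

section TwoPoint

variable {n : ℕ}

lemma lam_w (hn : n ≠ 1) (s : ℝ) (i : ℕ) :
    lam (w n s) i = (if i ≤ 1 then s else 0) + (if i ≤ n then (1 - s) / n else 0) := by
  have hzero : ∀ l ∉ ({1, n} : Finset ℕ), (if i ≤ l then w n s l / (l : ℝ) else 0) = 0 := by
    intro l hl
    simp only [mem_insert, mem_singleton, not_or] at hl
    simp [w, hl.1, hl.2]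
  rw [lam, tsum_eq_sum hzero, sum_insert (by simp [Ne.symm hn]), sum_singleton]
  simp only [w, if_true, if_neg hn]
  split_ifs <;> norm_num

lemma U_succ (q : ℕ → ℝ) (k : ℕ) :
    U q (k + 1) = (1 - q 1) * ∏ j ∈ Icc 2 (k + 1), (1 - q j / (j : ℝ)) := by
  rw [U, ← mul_prod_Ioc_eq_prod_Icc (by omega), ← Icc_add_one_left_eq_Ioc, Nat.cast_one, div_one]
  rfl

lemma A_w (hn : 2 ≤ n) (s : ℝ) (q : ℕ → ℝ) :
    A (w n s) q = q 1 * (s + (1 - s) / n) + (1 - q 1) * ((1 - s) * tailValue n q) := by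
  have hzero : ∀ i ∉ range n, U q i * q (i + 1) * lam (w n s) (i + 1) = 0 := by
    intro i hi
    simp only [mem_range, not_lt] at hi
    simp [lam_w (by omega : n ≠ 1), show ¬ i + 1 ≤ 1 by omega, show ¬ i + 1 ≤ n by omega]
  obtain ⟨m, rfl⟩ : ∃ m, n = m + 1 := ⟨n - 1, by omega⟩
  rw [A, tsum_eq_sum hzero, sum_range_succ', add_comm]
  congr 1
  · simp [U, lam_w (by omega : m + 1 ≠ 1)]
  · rw [tailValue, ← Ico_add_one_right_eq_Icc, sum_Ico_eq_sum_range, mul_sum, mul_sum, mul_sum]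
    rw [show m + 1 + 1 - 2 = m by omega]
    refine sum_congr rfl fun k hk => ?_
    simp only [mem_range] at hk
    rw [lam_w (by omega), if_neg (by omega), if_pos (by omega), U_succ,
      show 2 + k - 1 = k + 1 by omega, show 2 + k = k + 1 + 1 by omega]
    ring

end TwoPoint

section Optimum

variable {n : ℕ} {s : ℝ}

lemma A_w_le_one (hn : 2 ≤ n) (hs : s ∈ Set.Icc (0 : ℝ) 1) {q : ℕ → ℝ} (hq : IsStrategy q) :
    A (w n s) q ≤ 1 := by
  obtain ⟨hq0, hq1⟩ := hq 1 le_rfl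
  have hn' : (1 : ℝ) ≤ n := by exact_mod_cast (by omega : 1 ≤ n)
  have hstop : s + (1 - s) / n ≤ 1 := by
    linarith [div_le_self (by linarith [hs.2] : (0 : ℝ) ≤ 1 - s) hn']
  have hskip : (1 - s) * tailValue n q ≤ 1 :=
    mul_le_one₀ (by linarith [hs.1]) (tailValue_nonneg n hq) (tailValue_le_one n hq)
  rw [A_w hn]
  nlinarith

lemma A_w_le_supA (hn : 2 ≤ n) (hs : s ∈ Set.Icc (0 : ℝ) 1) {q : ℕ → ℝ} (hq : IsStrategy q) :
    A (w n s) q ≤ supA (w n s) :=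
  le_csSup ⟨1, by rintro y ⟨q', hq', rfl⟩; exact A_w_le_one hn hs hq'⟩ ⟨q, hq, rfl⟩

lemma stop_le_supA (hn : 2 ≤ n) (hs : s ∈ Set.Icc (0 : ℝ) 1) :
    s + (1 - s) / n ≤ supA (w n s) := by
  have h := A_w_le_supA hn hs (IsStrategy.zero.update_one (x := 1) (by simp))
  simpa [A_w hn] using h

lemma one_sub_mul_tailSup_le_supA (hn : 2 ≤ n) (hs0 : 0 ≤ s) (hs1 : s < 1) :
    (1 - s) * tailSup n ≤ supA (w n s) := by
  rw [mul_comm, ← le_div_iff₀ (by linarith)]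
  refine csSup_le ⟨0, 0, IsStrategy.zero, by simp [tailValue]⟩ ?_
  rintro y ⟨q, hq, rfl⟩
  rw [le_div_iff₀ (by linarith)]
  have h := A_w_le_supA hn ⟨hs0, hs1.le⟩ (hq.update_one (x := 0) (by simp))
  rw [A_w hn, tailValue_update_one] at h
  simpa [mul_comm] using h

lemma A_w_le (hn : 2 ≤ n) (hs : s ≤ 1) {q : ℕ → ℝ} (hq : IsStrategy q) :
    A (w n s) q ≤ q 1 * (s + (1 - s) / n) + (1 - q 1) * ((1 - s) * tailSup n) := by
  have hq1 : q 1 ≤ 1 := (hq 1 le_rfl).2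
  rw [A_w hn]
  gcongr
  exact tailValue_le_tailSup n hq

lemma one_sub_mul_le_supA_sub_A (hn : 2 ≤ n) (hs : s ∈ Set.Icc (0 : ℝ) 1) {q : ℕ → ℝ}
    (hq : IsStrategy q) :
    (1 - q 1) * (s + (1 - s) / n - (1 - s) * tailSup n) ≤ supA (w n s) - A (w n s) q := by
  have := A_w_le hn hs.2 hq
  have := stop_le_supA hn hs
  nlinarith

lemma mul_le_supA_sub_A (hn : 2 ≤ n) (hs0 : 0 ≤ s) (hs1 : s < 1) {q : ℕ → ℝ}
    (hq : IsStrategy q) :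
    q 1 * ((1 - s) * tailSup n - (s + (1 - s) / n)) ≤ supA (w n s) - A (w n s) q := by
  have := A_w_le hn hs1.le hq
  have := one_sub_mul_tailSup_le_supA hn hs0 hs1
  nlinarith

end Optimum

theorem stmt18_general (n : ℕ) (hn : 3 ≤ n) (B : ℝ)
    (hB : B = sSup {y | ∃ q : ℕ → ℝ, (∀ i, 1 ≤ i → q i ∈ Set.Icc (0 : ℝ) 1) ∧
      y = (1 / (n : ℝ)) * ∑ i ∈ Finset.Icc 2 n,
        (∏ j ∈ Finset.Icc 2 (i - 1), (1 - q j / (j : ℝ))) * q i}) :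
    ∀ ε : ℝ, 0 < ε →
      ε < min ((B - 1 / (n : ℝ)) / (1 + B - 1 / (n : ℝ)))
        (1 - (B - 1 / (n : ℝ)) / (1 + B - 1 / (n : ℝ))) →
      ¬ ∃ q : ℕ → ℝ, (∀ i, 1 ≤ i → q i ∈ Set.Icc (0 : ℝ) 1) ∧
        supA (w n ((B - 1 / (n : ℝ)) / (1 + B - 1 / (n : ℝ)) + ε)) - ε / 3 ≤
          A (w n ((B - 1 / (n : ℝ)) / (1 + B - 1 / (n : ℝ)) + ε)) q ∧
        supA (w n ((B - 1 / (n : ℝ)) / (1 + B - 1 / (n : ℝ)) - ε)) - ε / 3 ≤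
          A (w n ((B - 1 / (n : ℝ)) / (1 + B - 1 / (n : ℝ)) - ε)) q := by
  rintro ε hε hεσ ⟨q, hq, hplus, hminus⟩
  replace hB : B = tailSup n := hB
  replace hq : IsStrategy q := hq
  have hn2 : 2 ≤ n := by omega
  set D := 1 + B - 1 / (n : ℝ)
  set σ := (B - 1 / (n : ℝ)) / D
  have hεσ₁ : ε < σ := hεσ.trans_le (min_le_left _ _)
  have hεσ₂ : ε < 1 - σ := hεσ.trans_le (min_le_right _ _)
  have hD : 1 < D := by
    have hn' : 1 / (n : ℝ) < 1 := by
      rw [div_lt_one (by positivity)]; exact_mod_cast (by omega : 1 < n)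
    have hDpos : 0 < D := by linarith [hB ▸ tailSup_nonneg n]
    linarith [(div_pos_iff_of_pos_right hDpos).1 (hε.trans hεσ₁)]
  have hgap : ∀ s : ℝ, s + (1 - s) / n - (1 - s) * tailSup n = D * (s - σ) := by
    intro s
    rw [← hB, mul_sub, mul_div_cancel₀ _ (by positivity)]
    simp only [D]
    ring
  have h₁ := one_sub_mul_le_supA_sub_A hn2 ⟨by linarith, by linarith⟩ hq (s := σ + ε)
  have h₂ := mul_le_supA_sub_A hn2 (by linarith) (by linarith) hq (s := σ - ε)
  rw [hgap] at h₁
  rw [← neg_sub, hgap] at h₂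
  have hDε : D * ε ≤ 2 / 3 * ε :=
    calc D * ε = (1 - q 1) * (D * (σ + ε - σ)) + q 1 * -(D * (σ - ε - σ)) := by ring
      _ ≤ 2 / 3 * ε := by linarith
  linarith [(lt_mul_iff_one_lt_left hε).2 hD]

theorem stmt18 (n : ℕ) (hn : 3 ≤ n) (B : ℝ)
    (hB : B = sSup {y | ∃ q : ℕ → ℝ, (∀ i, 1 ≤ i → q i ∈ Set.Icc (0 : ℝ) 1) ∧
      y = (1 / (n : ℝ)) * ∑ i ∈ Finset.Icc 2 n,
        (∏ j ∈ Finset.Icc 2 (i - 1), (1 - q j / (j : ℝ))) * q i})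
    (hBe : 1 / Real.exp 1 ≤ B) :
    ∀ ε : ℝ, 0 < ε →
      ε < min ((B - 1 / (n : ℝ)) / (1 + B - 1 / (n : ℝ)))
        (1 - (B - 1 / (n : ℝ)) / (1 + B - 1 / (n : ℝ))) →
      ¬ ∃ q : ℕ → ℝ, (∀ i, 1 ≤ i → q i ∈ Set.Icc (0 : ℝ) 1) ∧
        supA (w n ((B - 1 / (n : ℝ)) / (1 + B - 1 / (n : ℝ)) + ε)) - ε / 3 ≤
          A (w n ((B - 1 / (n : ℝ)) / (1 + B - 1 / (n : ℝ)) + ε)) q ∧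
        supA (w n ((B - 1 / (n : ℝ)) / (1 + B - 1 / (n : ℝ)) - ε)) - ε / 3 ≤
          A (w n ((B - 1 / (n : ℝ)) / (1 + B - 1 / (n : ℝ)) - ε)) q :=
  stmt18_general n hn B hB
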